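/- Let p,q ≥ 1 and let ρ ∈ S_disc-nc(p,q). Let J be the union of two cycles of ρ, one contained in [p] and one contained in [p+1,p+q]. Let σ₁ be a permutation of J noncrossing on ρ|_J having a cycle that meets both of these cycles of ρ, and let σ₂ be a permutation of [p+q]∖J noncrossing on ρ|_{[p+q]∖J} whose orbit partition refines Π(ρ|_{[p+q]∖J}). Then the product σ := σ₁σ₂ belongs to S_ann-nc(p,q). -/

import Mathlib

namespace AnnNC

/-- The orbit ("same cycle") setoid of a permutation. -/
def orbitSetoid {α : Type*} (σ : Equiv.Perm α) : Setoid α :=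
  ⟨σ.SameCycle, ⟨fun x => Equiv.Perm.SameCycle.refl σ x,
    fun h => h.symm, fun h h' => h.trans h'⟩⟩

/-- Number of orbits (cycles, counting fixed points) of a permutation. -/
noncomputable def numOrbits {α : Type*} (σ : Equiv.Perm α) : ℕ :=
  Nat.card (Quotient (orbitSetoid σ))

/-- Number of blocks of the join `Π(σ) ∨ Π(ρ)` of the orbit partitions. -/
noncomputable def numJoin {α : Type*} (σ ρ : Equiv.Perm α) : ℕ :=
  Nat.card (Quotient (orbitSetoid σ ⊔ orbitSetoid ρ))

/-- Euler characteristic `χ_ρ(π) = #(ρ) + #(π) + #(π⁻¹ρ) − n`. -/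
noncomputable def euler {α : Type*} (ρ π : Equiv.Perm α) : ℤ :=
  (numOrbits ρ : ℤ) + (numOrbits π : ℤ) + (numOrbits (π⁻¹ * ρ) : ℤ) - (Nat.card α : ℤ)

/-- `π` is noncrossing on `ρ`. -/
def IsNoncrossingOn {α : Type*} (π ρ : Equiv.Perm α) : Prop :=
  euler ρ π = 2 * (numJoin π ρ : ℤ)

/-- Euler characteristic of permutations regarded as permutations of a subset `S`
(for permutations fixing the complement of `S` pointwise). -/
noncomputable def eulerOn {α : Type*} (S : Set α) (ρ π : Equiv.Perm α) : ℤ :=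
  ((numOrbits ρ : ℤ) - (Nat.card (Sᶜ : Set α) : ℤ)) +
    ((numOrbits π : ℤ) - (Nat.card (Sᶜ : Set α) : ℤ)) +
    ((numOrbits (π⁻¹ * ρ) : ℤ) - (Nat.card (Sᶜ : Set α) : ℤ)) - (Nat.card (S : Set α) : ℤ)

/-- `π` is noncrossing on `ρ`, both regarded as permutations of the subset `S`. -/
def IsNoncrossingWithin {α : Type*} (S : Set α) (π ρ : Equiv.Perm α) : Prop :=
  eulerOn S ρ π = 2 * ((numJoin π ρ : ℤ) - (Nat.card (Sᶜ : Set α) : ℤ))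

/-- `τ_{p,q} = (1,…,p)(p+1,…,p+q)` as a permutation of `Fin (p+q)`. -/
def tauPQ (p q : ℕ) : Equiv.Perm (Fin (p + q)) :=
  Equiv.permCongr finSumFinEquiv (Equiv.sumCongr (finRotate p) (finRotate q))

/-- Disc-noncrossing permutations: noncrossing on `τ_{p,q}` and the orbit partition
refines that of `τ_{p,q}`. -/
def SDiscNC (p q : ℕ) : Set (Equiv.Perm (Fin (p + q))) :=
  {π | IsNoncrossingOn π (tauPQ p q) ∧
    ∀ x y : Fin (p + q), π.SameCycle x y → ((x : ℕ) < p ↔ (y : ℕ) < p)}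

/-- Annular-noncrossing permutations: noncrossing on `τ_{p,q}` with at least one bridge. -/
def SAnnNC (p q : ℕ) : Set (Equiv.Perm (Fin (p + q))) :=
  {π | IsNoncrossingOn π (tauPQ p q) ∧
    ∃ a b : Fin (p + q), π.SameCycle a b ∧ (a : ℕ) < p ∧ p ≤ (b : ℕ)}

/-- The set of elements lying in bridges of `σ`. -/
def BridgeSet (p q : ℕ) (σ : Equiv.Perm (Fin (p + q))) : Set (Fin (p + q)) :=
  {x | ∃ a b : Fin (p + q), σ.SameCycle x a ∧ σ.SameCycle x b ∧ (a : ℕ) < p ∧ p ≤ (b : ℕ)}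

/-- `π₀` is the permutation induced by `π` on the partition `Π(τ_{p,q})`
(the first–return map of `π` to each of the two sides). -/
def IsPiZero (p q : ℕ) (π π₀ : Equiv.Perm (Fin (p + q))) : Prop :=
  ∀ a : Fin (p + q), ∃ k : ℕ, 0 < k ∧ π₀ a = (π ^ k) a ∧
    (((a : ℕ) < p) ↔ (((π ^ k) a : ℕ) < p)) ∧
    ∀ j : ℕ, 0 < j → j < k → ¬ (((a : ℕ) < p) ↔ (((π ^ j) a : ℕ) < p))

/-- The order `π ⪯ ρ` for (unhatted) permutations: the orbit partition of `π` refines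
that of `ρ` and `π` is noncrossing on `ρ`. -/
def permLe {α : Type*} (π ρ : Equiv.Perm α) : Prop :=
  (∀ x y : α, π.SameCycle x y → ρ.SameCycle x y) ∧ IsNoncrossingOn π ρ

/-- The order relation `π ⪯ ρ̂` in `S_nc-sd(p,q)`, i.e. `Kr(ρ) ⪯ Kr(π)`. -/
def leAnnHat (p q : ℕ) (π ρ : Equiv.Perm (Fin (p + q))) : Prop :=
  permLe (ρ⁻¹ * tauPQ p q) (π⁻¹ * tauPQ p q)

/-- `σ` is the permutation induced by `π` on the subset `J` (first-return map),
extended by the identity off `J`. -/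
def IsInducedOn {α : Type*} (π σ : Equiv.Perm α) (J : Set α) : Prop :=
  (∀ a ∉ J, σ a = a) ∧
  ∀ a ∈ J, ∃ k : ℕ, 0 < k ∧ σ a = (π ^ k) a ∧ (π ^ k) a ∈ J ∧
    ∀ j : ℕ, 0 < j → j < k → (π ^ j) a ∉ J

/-- The size of an orbit of a permutation. -/
noncomputable def orbitSize {α : Type*} (σ : Equiv.Perm α) (c : Quotient (orbitSetoid σ)) : ℕ :=
  Nat.card {x : α // Quotient.mk (orbitSetoid σ) x = c}

/-- `∏_{U ∈ Π(σ)} (−1)^{|U|−1} C_{|U|−1}`. -/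
noncomputable def catProd {α : Type*} (σ : Equiv.Perm α) : ℤ :=
  ∏ᶠ c : Quotient (orbitSetoid σ),
    ((-1 : ℤ) ^ (orbitSize σ c - 1) * (catalan (orbitSize σ c - 1) : ℤ))

/-- The carrier of the poset `S_nc-sd(p,q)`: pairs (permutation, hatted?). -/
def NCSDSet (p q : ℕ) : Set (Equiv.Perm (Fin (p + q)) × Bool) :=
  {z | (z.2 = false ∧ (z.1 ∈ SDiscNC p q ∪ SAnnNC p q)) ∨ (z.2 = true ∧ z.1 ∈ SDiscNC p q)}

/-- The partial order of `S_nc-sd(p,q)`. -/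
def ncsdLe (p q : ℕ) (a b : Equiv.Perm (Fin (p + q)) × Bool) : Prop :=
  (a.2 = false ∧ b.2 = false ∧ permLe a.1 b.1) ∨
  (b.2 = true ∧ permLe (b.1⁻¹ * tauPQ p q) (a.1⁻¹ * tauPQ p q))

/-!
Write `#π` for the number of cycles of `π` and `χ_ρ(π) = #ρ + #π + #(π⁻¹ρ) - n`. Multiplying
by a transposition merges two cycles or splits one, so it changes `#π` by exactly one; induction
on transpositions gives the subadditivity `#A + #B ≤ #(AB) + n` and the genus bound
`χ_ρ(π) ≤ 2 #(Π(π) ∨ Π(ρ))`.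

Subadditivity for `(σ⁻¹ρ)(ρ⁻¹τ)` gives `χ_τ(σ) ≥ χ_ρ(σ) + χ_τ(ρ) - 2#ρ`, and `χ_τ(ρ) = 2#τ`
because `ρ` is disc-noncrossing. The characteristic `χ_ρ(σ)` splits over `J` and its complement;
there the two noncrossing hypotheses hold, and joining `σ₁` with `ρ|_J` can at most merge the two
cycles of `ρ` in `J`, so `χ_ρ(σ) ≥ 2#ρ - 2`. Hence `χ_τ(σ) ≥ 2#τ - 2 ≥ 2 #(Π(σ) ∨ Π(τ))`, the
last step because the bridge of `σ₁` joins the two cycles of `τ`; the genus bound gives the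
reverse inequality.
-/

open Equiv

section Merge

variable {α : Type*}

def mergeSetoid (r : Setoid α) (x y : α) : Setoid α :=
  Relation.EqvGen.setoid fun u w => r u w ∨ (u = x ∧ w = y)

variable {r s : Setoid α} {x y : α}

lemma mergeSetoid_le_iff : mergeSetoid r x y ≤ s ↔ r ≤ s ∧ s x y := by
  refine ⟨fun h => ⟨fun u w huw => h (Relation.EqvGen.rel _ _ (Or.inl huw)),
    h (Relation.EqvGen.rel _ _ (Or.inr ⟨rfl, rfl⟩))⟩,
    fun ⟨hrs, hxy⟩ => Setoid.eqvGen_le ?_⟩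
  rintro u w (huw | ⟨rfl, rfl⟩)
  exacts [hrs huw, hxy]

lemma le_mergeSetoid : r ≤ mergeSetoid r x y := (mergeSetoid_le_iff.1 le_rfl).1

lemma mergeSetoid_rel : mergeSetoid r x y x y := (mergeSetoid_le_iff.1 le_rfl).2

lemma mergeSetoid_rel_of_rel_or_rel {z w : α} (hz : r z x ∨ r z y) (hw : r w x ∨ r w y) :
    mergeSetoid r x y z w := by
  have to_x : ∀ {t}, r t x ∨ r t y → mergeSetoid r x y t x := by
    rintro t (h | h)
    · exact le_mergeSetoid h
    · exact (mergeSetoid r x y).trans (le_mergeSetoid h) ((mergeSetoid r x y).symm mergeSetoid_rel)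
  exact (mergeSetoid r x y).trans (to_x hz) ((mergeSetoid r x y).symm (to_x hw))

lemma mergeSetoid_eq_self (h : r x y) : mergeSetoid r x y = r :=
  le_antisymm (mergeSetoid_le_iff.2 ⟨le_rfl, h⟩) le_mergeSetoid

lemma mergeSetoid_mono (h : r ≤ s) : mergeSetoid r x y ≤ mergeSetoid s x y :=
  mergeSetoid_le_iff.2 ⟨h.trans le_mergeSetoid, mergeSetoid_rel⟩

lemma card_quotient_le_of_le [Finite α] (h : r ≤ s) :
    Nat.card (Quotient s) ≤ Nat.card (Quotient r) :=
  Nat.card_le_card_of_surjective _ (Quotient.map_surjective (f := id) h Function.surjective_id)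

lemma card_quotient_le_card_mergeSetoid_add_one [Finite α] :
    Nat.card (Quotient r) ≤ Nat.card (Quotient (mergeSetoid r x y)) + 1 := by
  classical
  -- away from the class of `y`, merging identifies nothing
  have hker : mergeSetoid r x y ≤
      Setoid.ker fun z => if r z y then (⟦x⟧ : Quotient r) else ⟦z⟧ := by
    refine mergeSetoid_le_iff.2 ⟨fun u w huw => ?_, by simp [Setoid.ker_def]⟩
    have : r u y ↔ r w y := ⟨r.trans (r.symm huw), r.trans huw⟩
    by_cases hu : r u y <;> simp [Setoid.ker_def, hu, this.1, this.not.1, Quotient.sound huw]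
  let f : Quotient r → Option (Quotient (mergeSetoid r x y)) := fun c =>
    if c = ⟦y⟧ then none else some (Quotient.map id le_mergeSetoid c)
  have hf : Function.Injective f := by
    refine fun c d => Quotient.inductionOn₂ c d fun u w huw => ?_
    by_cases hu : (⟦u⟧ : Quotient r) = ⟦y⟧ <;> by_cases hw : (⟦w⟧ : Quotient r) = ⟦y⟧
    · rw [hu, hw]
    all_goals simp only [f, hu, hw, if_true, if_false, reduceCtorEq, Option.some.injEq] at huw
    rw [Quotient.eq] at hu hw
    simpa [Setoid.ker_def, hu, hw] using hker (Quotient.exact huw)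
  simpa using Nat.card_le_card_of_injective f hf

lemma card_quotient_mergeSetoid_lt [Finite α] (h : ¬ r x y) :
    Nat.card (Quotient (mergeSetoid r x y)) < Nat.card (Quotient r) := by
  let π : Quotient r → Quotient (mergeSetoid r x y) := Quotient.map id le_mergeSetoid
  have hπ : Function.Surjective π := Quotient.map_surjective le_mergeSetoid Function.surjective_id
  refine (Nat.card_le_card_of_surjective π hπ).lt_of_ne fun hcard => h ?_
  have hinj := ((Nat.bijective_iff_surjective_and_card π).2 ⟨hπ, hcard.symm⟩).1
  exact Quotient.exact (hinj (Quotient.sound mergeSetoid_rel : π ⟦x⟧ = π ⟦y⟧))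

lemma card_quotient_mergeSetoid_add_one [Finite α] (h : ¬ r x y) :
    Nat.card (Quotient (mergeSetoid r x y)) + 1 = Nat.card (Quotient r) :=
  le_antisymm (card_quotient_mergeSetoid_lt h) card_quotient_le_card_mergeSetoid_add_one

end Merge

section Orbits

variable {α : Type*} {σ π ρ : Perm α}

lemma orbitSetoid_apply (σ : Perm α) (z : α) : orbitSetoid σ z (σ z) := ⟨1, rfl⟩

lemma orbitSetoid_le_of_forall {r : Setoid α} (h : ∀ z, r z (σ z)) : orbitSetoid σ ≤ r := by
  rintro x _ ⟨i, rfl⟩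
  induction i using Int.induction_on with
  | zero => exact r.refl x
  | succ i ih => rw [add_comm, zpow_one_add, Perm.mul_apply]; exact r.trans ih (h _)
  | pred i ih =>
    rw [sub_eq_neg_add, zpow_add, zpow_neg_one, Perm.mul_apply]
    refine r.trans ih (r.symm ?_)
    simpa using h (σ⁻¹ ((σ ^ (-(i : ℤ))) x))

lemma orbitSetoid_mul_le_sup (σ π : Perm α) :
    orbitSetoid (σ * π) ≤ orbitSetoid σ ⊔ orbitSetoid π :=
  orbitSetoid_le_of_forall fun z => (orbitSetoid σ ⊔ orbitSetoid π).trans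
    (le_sup_right (a := orbitSetoid σ) (orbitSetoid_apply π z))
    (le_sup_left (b := orbitSetoid π) (orbitSetoid_apply σ (π z)))

lemma orbitSetoid_inv (σ : Perm α) : orbitSetoid σ⁻¹ = orbitSetoid σ :=
  Setoid.ext fun _ _ => Perm.sameCycle_inv

lemma numOrbits_inv (σ : Perm α) : numOrbits σ⁻¹ = numOrbits σ := by
  rw [numOrbits, orbitSetoid_inv, numOrbits]

lemma numJoin_inv_left (σ ρ : Perm α) : numJoin σ⁻¹ ρ = numJoin σ ρ := by
  rw [numJoin, orbitSetoid_inv, numJoin]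

lemma numOrbits_one : numOrbits (1 : Perm α) = Nat.card α :=
  (Nat.card_eq_of_bijective _ ⟨fun _ _ h => Perm.sameCycle_one.1 (Quotient.exact h),
    Quotient.mk_surjective⟩).symm

lemma numJoin_eq_numOrbits_of_le (h : orbitSetoid π ≤ orbitSetoid ρ) :
    numJoin π ρ = numOrbits ρ := by
  rw [numJoin, sup_eq_right.2 h, numOrbits]

lemma numJoin_add_one_le [Finite α] {a b : α} (hπ : π.SameCycle a b) (hρ : ¬ ρ.SameCycle a b) :
    numJoin π ρ + 1 ≤ numOrbits ρ :=
  calc numJoin π ρ + 1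
      ≤ Nat.card (Quotient (mergeSetoid (orbitSetoid ρ) a b)) + 1 :=
        Nat.add_le_add_right (card_quotient_le_of_le
          (mergeSetoid_le_iff.2 ⟨le_sup_right, le_sup_left (b := orbitSetoid ρ) hπ⟩)) 1
    _ = numOrbits ρ := card_quotient_mergeSetoid_add_one hρ

lemma mapsTo_of_forall_notMem {S : Set α} (h : ∀ x ∉ S, σ x = x) : Set.MapsTo σ S S := by
  intro x hx
  by_contra hσx
  rw [σ.injective (h _ hσx)] at hσx
  exact hσx hx

lemma disjoint_of_forall_notMem {S : Set α} (hσ : ∀ x ∉ S, σ x = x)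
    (hπ : ∀ x ∈ S, π x = x) : σ.Disjoint π := fun x =>
  (em (x ∈ S)).elim (fun hx => Or.inr (hπ x hx)) fun hx => Or.inl (hσ x hx)

lemma sameCycle_iff_of_eqOn [Finite α] {T : Set α} (hT : Set.MapsTo σ T T) (hσπ : Set.EqOn σ π T)
    {x y : α} (hx : x ∈ T) : σ.SameCycle x y ↔ π.SameCycle x y := by
  have key : ∀ k : ℕ, (σ ^ k) x ∈ T ∧ (π ^ k) x = (σ ^ k) x := by
    intro k
    induction k with
    | zero => exact ⟨hx, rfl⟩
    | succ k ih =>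
      simp only [pow_succ', Perm.mul_apply, ih.2]
      exact ⟨hT ih.1, (hσπ ih.1).symm⟩
  constructor <;> intro h <;> obtain ⟨k, rfl⟩ := h.exists_nat_pow_eq
  · exact ⟨k, by rw [zpow_natCast, (key k).2]⟩
  · exact ⟨k, by rw [zpow_natCast, (key k).2]⟩

end Orbits

section Swap

variable {α : Type*} [DecidableEq α] {σ : Perm α} {x y : α}

lemma orbitSetoid_swap_mul_le (σ : Perm α) (x y : α) :
    orbitSetoid (swap x y * σ) ≤ mergeSetoid (orbitSetoid σ) x y := by
  refine orbitSetoid_le_of_forall fun z => (mergeSetoid _ x y).trans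
    (le_mergeSetoid (orbitSetoid_apply σ z)) ?_
  rw [Perm.mul_apply, swap_apply_def]
  split_ifs with hx hy
  · rw [hx]; exact mergeSetoid_rel
  · rw [hy]; exact (mergeSetoid _ x y).symm mergeSetoid_rel
  · exact (mergeSetoid _ x y).refl _

lemma mergeSetoid_orbitSetoid_swap_mul (σ : Perm α) (x y : α) :
    mergeSetoid (orbitSetoid (swap x y * σ)) x y = mergeSetoid (orbitSetoid σ) x y := by
  refine le_antisymm (mergeSetoid_le_iff.2 ⟨orbitSetoid_swap_mul_le σ x y, mergeSetoid_rel⟩)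
    (mergeSetoid_le_iff.2 ⟨?_, mergeSetoid_rel⟩)
  simpa using orbitSetoid_swap_mul_le (swap x y * σ) x y

variable [Finite α]

lemma sameCycle_swap_mul_of_not_sameCycle (h : ¬ σ.SameCycle x y) :
    (swap x y * σ).SameCycle x y := by
  -- on the `σ`-cycle of `y`, which avoids `x`, the map `swap x y * σ` agrees with `σ` except at
  -- `σ⁻¹ y ↦ x`: walk backwards from there
  let z : ℕ → α := fun k => (σ⁻¹ ^ k) (σ⁻¹ y)
  have key : ∀ k, σ.SameCycle y (z k) ∧ (swap x y * σ).SameCycle (z k) x := by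
    intro k
    induction k with
    | zero =>
      have hz : z 0 = σ⁻¹ y := by simp only [z, pow_zero, Perm.one_apply]
      refine ⟨Perm.sameCycle_apply_right.1 (by simp [hz, Perm.SameCycle.refl]), ⟨1, ?_⟩⟩
      simp [hz]
    | succ k ih =>
      have hz : z (k + 1) = σ⁻¹ (z k) := by simp only [z, pow_succ', Perm.mul_apply]
      have hx : z k ≠ x := fun hx => h (hx ▸ ih.1).symm
      have hstep : (swap x y * σ) (z (k + 1)) = swap x y (z k) := by simp [hz]
      refine ⟨hz ▸ Perm.sameCycle_apply_right.1 (by simpa using ih.1), ?_⟩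
      rcases eq_or_ne (z k) y with hy | hy
      · exact ⟨1, by rw [zpow_one, hstep, hy, swap_apply_right]⟩
      · rw [swap_apply_of_ne_of_ne hx hy] at hstep
        exact Perm.SameCycle.trans ⟨1, by rw [zpow_one, hstep]⟩ ih.2
  have hy : σ⁻¹.SameCycle (σ⁻¹ y) y :=
    (Perm.sameCycle_apply_left.1 (by simp [Perm.SameCycle.refl])).inv
  obtain ⟨k, hk⟩ := hy.exists_nat_pow_eq
  have hxy : (swap x y * σ).SameCycle ((σ⁻¹ ^ k) (σ⁻¹ y)) x := (key k).2
  rw [hk] at hxy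
  exact hxy.symm

lemma numOrbits_swap_mul_le (σ : Perm α) (x y : α) :
    numOrbits (swap x y * σ) ≤ numOrbits σ + 1 :=
  calc numOrbits (swap x y * σ)
      ≤ Nat.card (Quotient (mergeSetoid (orbitSetoid (swap x y * σ)) x y)) + 1 :=
        card_quotient_le_card_mergeSetoid_add_one
    _ = Nat.card (Quotient (mergeSetoid (orbitSetoid σ) x y)) + 1 := by
        rw [mergeSetoid_orbitSetoid_swap_mul]
    _ ≤ numOrbits σ + 1 := Nat.add_le_add_right (card_quotient_le_of_le le_mergeSetoid) 1

lemma numOrbits_swap_mul_add_one (h : ¬ σ.SameCycle x y) :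
    numOrbits (swap x y * σ) + 1 = numOrbits σ := by
  have := card_quotient_mergeSetoid_add_one (r := orbitSetoid σ) h
  rwa [← mergeSetoid_orbitSetoid_swap_mul,
    mergeSetoid_eq_self (sameCycle_swap_mul_of_not_sameCycle h)] at this

lemma numOrbits_swap_mul_apply (hx : σ x ≠ x) :
    numOrbits (swap x (σ x) * σ) = numOrbits σ + 1 := by
  have hfix : Function.IsFixedPt (swap x (σ x) * σ) x := by
    simp [Function.IsFixedPt, swap_apply_right]
  have := numOrbits_swap_mul_add_one fun h => hx (h.eq_of_left hfix).symm
  rw [swap_mul_self_mul] at this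
  omega

@[elab_as_elim]
theorem induction_on_swap_mul_apply {motive : Perm α → Prop} (σ : Perm α) (one : motive 1)
    (swap_mul : ∀ (τ : Perm α) (a : α), τ a ≠ a → motive (swap a (τ a) * τ) → motive τ) :
    motive σ := by
  cases nonempty_fintype α
  induction hn : σ.support.card using Nat.strong_induction_on generalizing σ with
  | _ n ih =>
    by_cases h1 : σ = 1
    · exact h1 ▸ one
    obtain ⟨x, hx⟩ := not_forall.1 (mt Perm.ext h1)
    exact swap_mul σ x hx (ih _ (hn ▸ Perm.card_support_swap_mul hx) _ rfl)

theorem numOrbits_add_numOrbits_le (σ π : Perm α) :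
    numOrbits σ + numOrbits π ≤ numOrbits (σ * π) + Nat.card α := by
  induction σ using induction_on_swap_mul_apply with
  | one => rw [one_mul, numOrbits_one, add_comm]
  | swap_mul σ x hx ih =>
    have h₁ := numOrbits_swap_mul_apply hx
    have h₂ := numOrbits_swap_mul_le (σ * π) x (σ x)
    rw [← mul_assoc] at h₂
    omega

theorem numOrbits_add_numOrbits_add_numOrbits_mul_le (σ π : Perm α) :
    numOrbits σ + numOrbits π + numOrbits (σ * π) ≤ Nat.card α + 2 * numJoin σ π := by
  induction σ using induction_on_swap_mul_apply with
  | one =>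
    rw [one_mul, numOrbits_one,
      numJoin_eq_numOrbits_of_le fun a _ h => Perm.sameCycle_one.1 h ▸ Setoid.refl' _ a]
    omega
  | swap_mul σ x hx ih =>
    set σ' := swap x (σ x) * σ
    have hσ' : numOrbits σ' = numOrbits σ + 1 := numOrbits_swap_mul_apply hx
    have hσ : swap x (σ x) * σ' = σ := swap_mul_self_mul _ _ _
    have hle : orbitSetoid σ ≤ mergeSetoid (orbitSetoid σ') x (σ x) := by
      simpa only [hσ] using orbitSetoid_swap_mul_le σ' x (σ x)
    -- `σπ = swap x (σ x) * σ'π` either splits a cycle of `σ'π`, inside one block of the join,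
    -- or merges two cycles, merging at most two blocks
    by_cases hc : (σ' * π).SameCycle x (σ x)
    · have h₁ : numOrbits (σ * π) ≤ numOrbits (σ' * π) + 1 := by
        rw [← hσ, mul_assoc]; exact numOrbits_swap_mul_le _ _ _
      have h₂ : numJoin σ' π ≤ numJoin σ π := card_quotient_le_of_le <| sup_le
        (hle.trans (mergeSetoid_le_iff.2 ⟨le_sup_left, orbitSetoid_mul_le_sup σ' π hc⟩))
        le_sup_right
      omega
    · have h₁ : numOrbits (σ * π) + 1 = numOrbits (σ' * π) := by
        rw [← hσ, mul_assoc]; exact numOrbits_swap_mul_add_one hc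
      have h₂ : numJoin σ' π ≤ numJoin σ π + 1 :=
        card_quotient_le_card_mergeSetoid_add_one.trans <| Nat.add_le_add_right
          (card_quotient_le_of_le <| sup_le (hle.trans (mergeSetoid_mono le_sup_left))
            (le_sup_right.trans le_mergeSetoid)) 1
      omega

theorem numOrbits_mul_add_card {σ π : Perm α} (h : σ.Disjoint π) :
    numOrbits (σ * π) + Nat.card α = numOrbits σ + numOrbits π := by
  induction σ using induction_on_swap_mul_apply with
  | one => rw [one_mul, numOrbits_one, add_comm]
  | swap_mul σ x hx ih =>
    have hπx : π x = x := (h x).resolve_left hx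
    have h' : (swap x (σ x) * σ).Disjoint π := fun z => (h z).imp_left fun hz => by
      rw [Perm.mul_apply, hz, swap_apply_of_ne_of_ne (by rintro rfl; exact hx hz)
        (by rintro rfl; exact hx (σ.injective hz))]
    have h₁ := numOrbits_swap_mul_apply hx
    have h₂ : numOrbits (swap x (σ x) * σ * π) = numOrbits (σ * π) + 1 := by
      have hσπ : (σ * π) x = σ x := by rw [Perm.mul_apply, hπx]
      rw [mul_assoc, ← hσπ]
      exact numOrbits_swap_mul_apply (hσπ ▸ hx)
    have := ih h'
    omega

end Swap

section Euler

variable {α : Type*} [Finite α]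

lemma card_add_card_compl (S : Set α) : Nat.card S + Nat.card (Sᶜ : Set α) = Nat.card α := by
  rw [Nat.card_coe_set_eq, Nat.card_coe_set_eq, Set.ncard_add_ncard_compl]

theorem euler_le_two_mul_numJoin (ρ π : Perm α) : euler ρ π ≤ 2 * numJoin π ρ := by
  classical
  have := numOrbits_add_numOrbits_add_numOrbits_mul_le π⁻¹ ρ
  rw [numOrbits_inv, numJoin_inv_left] at this
  unfold euler
  omega

theorem euler_add_euler_le (τ ρ σ : Perm α) :
    euler ρ σ + euler τ ρ ≤ euler τ σ + 2 * numOrbits ρ := by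
  classical
  have := numOrbits_add_numOrbits_le (σ⁻¹ * ρ) (ρ⁻¹ * τ)
  rw [show σ⁻¹ * ρ * (ρ⁻¹ * τ) = σ⁻¹ * τ by group] at this
  unfold euler
  omega

theorem euler_mul_mul {S : Set α} {σ₁ ρ₁ σ₂ ρ₂ : Perm α} (hσ₁ : ∀ x ∉ S, σ₁ x = x)
    (hρ₁ : ∀ x ∉ S, ρ₁ x = x) (hσ₂ : ∀ x ∈ S, σ₂ x = x) (hρ₂ : ∀ x ∈ S, ρ₂ x = x) :
    euler (ρ₁ * ρ₂) (σ₁ * σ₂) = eulerOn S ρ₁ σ₁ + eulerOn Sᶜ ρ₂ σ₂ := by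
  classical
  have hκ₁ : ∀ x ∉ S, (σ₁⁻¹ * ρ₁) x = x := fun x hx => by
    rw [Perm.mul_apply, hρ₁ x hx, Perm.inv_eq_iff_eq, hσ₁ x hx]
  have hκ₂ : ∀ x ∈ S, (σ₂⁻¹ * ρ₂) x = x := fun x hx => by
    rw [Perm.mul_apply, hρ₂ x hx, Perm.inv_eq_iff_eq, hσ₂ x hx]
  have hcomm : Commute (σ₁⁻¹ * ρ₁) σ₂⁻¹ := (disjoint_of_forall_notMem hκ₁ fun x hx => by
    rw [Perm.inv_eq_iff_eq, hσ₂ x hx]).commute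
  have hmul : (σ₁ * σ₂)⁻¹ * (ρ₁ * ρ₂) = (σ₁⁻¹ * ρ₁) * (σ₂⁻¹ * ρ₂) :=
    calc (σ₁ * σ₂)⁻¹ * (ρ₁ * ρ₂) = σ₂⁻¹ * (σ₁⁻¹ * ρ₁) * ρ₂ := by group
      _ = (σ₁⁻¹ * ρ₁) * (σ₂⁻¹ * ρ₂) := by rw [← hcomm.eq, mul_assoc]
  have hσ := numOrbits_mul_add_card (disjoint_of_forall_notMem hσ₁ hσ₂)
  have hρ := numOrbits_mul_add_card (disjoint_of_forall_notMem hρ₁ hρ₂)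
  have hκ := numOrbits_mul_add_card (disjoint_of_forall_notMem hκ₁ hκ₂)
  have hS := card_add_card_compl S
  rw [← hmul] at hκ
  simp only [euler, eulerOn, compl_compl]
  omega

end Euler

section Tau

lemma sameCycle_finRotate {n : ℕ} (i j : Fin n) : (finRotate n).SameCycle i j := by
  rcases lt_or_ge n 2 with hn | hn
  · have : Subsingleton (Fin n) := Fin.subsingleton_iff_le_one.2 (by omega)
    rw [Subsingleton.elim i j]
  · have hmem : ∀ k, (finRotate n) k ≠ k := fun k => by
      rw [← Perm.mem_support, support_finRotate_of_le hn]; exact Finset.mem_univ k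
    exact (isCycle_finRotate_of_le hn).sameCycle (hmem i) (hmem j)

lemma tauPQ_zpow (p q : ℕ) (i : ℤ) : tauPQ p q ^ i =
    finSumFinEquiv.permCongr (Perm.sumCongr (finRotate p ^ i) (finRotate q ^ i)) := by
  have hτ : tauPQ p q =
      finSumFinEquiv.permCongrHom (Perm.sumCongrHom _ _ (finRotate p, finRotate q)) := rfl
  rw [hτ, ← map_zpow, ← map_zpow]
  rfl

lemma sameCycle_tauPQ_iff {p q : ℕ} (x y : Fin (p + q)) :
    (tauPQ p q).SameCycle x y ↔ ((x : ℕ) < p ↔ (y : ℕ) < p) := by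
  obtain ⟨s, rfl⟩ := finSumFinEquiv.surjective x
  obtain ⟨t, rfl⟩ := finSumFinEquiv.surjective y
  simp only [Perm.SameCycle, tauPQ_zpow, Equiv.permCongr_apply, Equiv.symm_apply_apply,
    EmbeddingLike.apply_eq_iff_eq]
  rcases s with i | i <;> rcases t with j | j <;> simp
  · exact sameCycle_finRotate i j
  · exact sameCycle_finRotate i j

end Tau

section Glue

variable {α : Type*} [Finite α]

theorem two_mul_numOrbits_sub_two_le_euler {ρ ρJ ρJc σ₁ σ₂ : Perm α} {u v : α} {J : Set α}
    (hJ : J = {x | ρ.SameCycle u x ∨ ρ.SameCycle v x})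
    (hρJ : ∀ x ∈ J, ρJ x = ρ x) (hρJ' : ∀ x ∉ J, ρJ x = x)
    (hρJc : ∀ x ∉ J, ρJc x = ρ x) (hρJc' : ∀ x ∈ J, ρJc x = x)
    (hσ₁fix : ∀ x ∉ J, σ₁ x = x) (hσ₂fix : ∀ x ∈ J, σ₂ x = x)
    (hσ₁nc : IsNoncrossingWithin J σ₁ ρJ) (hσ₂nc : IsNoncrossingWithin Jᶜ σ₂ ρJc)
    (hσ₂ref : ∀ x y, σ₂.SameCycle x y → ρ.SameCycle x y) :
    2 * (numOrbits ρ : ℤ) - 2 ≤ euler ρ (σ₁ * σ₂) := by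
  classical
  have hJρ : ∀ x, ρ x ∈ J ↔ x ∈ J := by simp [hJ, Perm.sameCycle_apply_right]
  have hsplit : ρJ * ρJc = ρ := Perm.ext fun x => by
    by_cases hx : x ∈ J
    · rw [Perm.mul_apply, hρJc' x hx, hρJ x hx]
    · rw [Perm.mul_apply, hρJc x hx, hρJ' _ ((hJρ x).not.2 hx)]
  have hJ_cycles : ∀ w ∈ J, ρJ.SameCycle w u ∨ ρJ.SameCycle w v := by
    intro w hw
    have htransfer {y : α} : ρ.SameCycle w y → ρJ.SameCycle w y :=
      (sameCycle_iff_of_eqOn (fun x hx => (hJρ x).2 hx) (fun x hx => (hρJ x hx).symm) hw).1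
    rw [hJ] at hw
    exact hw.imp (fun h => htransfer h.symm) fun h => htransfer h.symm
  -- every cycle of `σ₁` lies in `J`, which is one block once the cycles of `u` and `v` merge
  have hσ₁_le : orbitSetoid σ₁ ≤ mergeSetoid (orbitSetoid ρJ) u v := by
    refine orbitSetoid_le_of_forall fun z => ?_
    by_cases hz : z ∈ J
    · exact mergeSetoid_rel_of_rel_or_rel (hJ_cycles z hz)
        (hJ_cycles _ (mapsTo_of_forall_notMem hσ₁fix hz))
    · exact (hσ₁fix z hz).symm ▸ Setoid.refl' _ z
  have hjoin₁ : numOrbits ρJ ≤ numJoin σ₁ ρJ + 1 :=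
    card_quotient_le_card_mergeSetoid_add_one.trans <| Nat.add_le_add_right
      (card_quotient_le_of_le (sup_le hσ₁_le le_mergeSetoid)) 1
  have hjoin₂ : numJoin σ₂ ρJc = numOrbits ρJc := numJoin_eq_numOrbits_of_le fun x y h => by
    by_cases hx : x ∈ J
    · obtain rfl := h.eq_of_left (hσ₂fix x hx)
      exact Perm.SameCycle.refl _ _
    · exact (sameCycle_iff_of_eqOn (T := Jᶜ) (fun z hz => (hJρ z).not.2 hz)
        (fun z hz => (hρJc z hz).symm) hx).1 (hσ₂ref x y h)
  have hρ := numOrbits_mul_add_card (disjoint_of_forall_notMem hρJ' hρJc')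
  have hcard := card_add_card_compl J
  rw [← hsplit, euler_mul_mul hσ₁fix hρJ' hσ₂fix hρJc']
  unfold IsNoncrossingWithin at hσ₁nc hσ₂nc
  rw [hσ₁nc, hσ₂nc, hjoin₂, compl_compl]
  omega

end Glue

end AnnNC

open AnnNC in
theorem stmt4_general (p q : ℕ)
    (ρ : Equiv.Perm (Fin (p + q))) (hρ : ρ ∈ SDiscNC p q)
    (u v : Fin (p + q)) (hu : (u : ℕ) < p) (hv : p ≤ (v : ℕ))
    (J : Set (Fin (p + q))) (hJ : J = {x | ρ.SameCycle u x ∨ ρ.SameCycle v x})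
    (ρJ ρJc : Equiv.Perm (Fin (p + q)))
    (hρJ : ∀ x ∈ J, ρJ x = ρ x) (hρJ' : ∀ x ∉ J, ρJ x = x)
    (hρJc : ∀ x ∉ J, ρJc x = ρ x) (hρJc' : ∀ x ∈ J, ρJc x = x)
    (σ₁ σ₂ : Equiv.Perm (Fin (p + q)))
    (hσ₁fix : ∀ x ∉ J, σ₁ x = x) (hσ₂fix : ∀ x ∈ J, σ₂ x = x)
    (hσ₁nc : IsNoncrossingWithin J σ₁ ρJ)
    (hσ₁br : ∃ a b : Fin (p + q), σ₁.SameCycle a b ∧ ρ.SameCycle u a ∧ ρ.SameCycle v b)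
    (hσ₂nc : IsNoncrossingWithin Jᶜ σ₂ ρJc)
    (hσ₂ref : ∀ x y : Fin (p + q), σ₂.SameCycle x y → ρ.SameCycle x y) :
    σ₁ * σ₂ ∈ SAnnNC p q := by
  obtain ⟨a, b, hab, hua, hvb⟩ := hσ₁br
  have ha : (a : ℕ) < p := (hρ.2 u a hua).1 hu
  have hb : p ≤ (b : ℕ) := not_lt.1 fun hb => (not_lt.2 hv) ((hρ.2 v b hvb).2 hb)
  have hσab : (σ₁ * σ₂).SameCycle a b :=
    (sameCycle_iff_of_eqOn (mapsTo_of_forall_notMem hσ₁fix)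
      (fun z hz => by rw [Equiv.Perm.mul_apply, hσ₂fix z hz]) (hJ ▸ Or.inl hua)).1 hab
  refine ⟨?_, a, b, hσab, ha, hb⟩
  have hρτ : euler (tauPQ p q) ρ = 2 * numOrbits (tauPQ p q) := by
    rw [hρ.1, numJoin_eq_numOrbits_of_le fun x y h => (sameCycle_tauPQ_iff x y).2 (hρ.2 x y h)]
  have hab_τ : ¬ (tauPQ p q).SameCycle a b := fun h => by
    have := ((sameCycle_tauPQ_iff a b).1 h).1 ha
    omega
  have hglue := two_mul_numOrbits_sub_two_le_euler hJ hρJ hρJ' hρJc hρJc' hσ₁fix hσ₂fix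
    hσ₁nc hσ₂nc hσ₂ref
  have htri := euler_add_euler_le (tauPQ p q) ρ (σ₁ * σ₂)
  have hjoin := numJoin_add_one_le hσab hab_τ
  have hgenus := euler_le_two_mul_numJoin (tauPQ p q) (σ₁ * σ₂)
  unfold IsNoncrossingOn
  omega

open AnnNC in
/-- gluing an annular noncrossing permutation `σ₁` on the union `J` of two
cycles of `ρ` (one in each circle) with a disc-noncrossing permutation `σ₂` below `ρ` on the
complement of `J` produces an element `σ₁σ₂` of `S_ann-nc(p,q)`.  Here `σ₁` and `σ₂` are
realised as permutations of `Fin (p+q)` fixing the complement of their set pointwise, and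
`ρJ`, `ρJc` are the restrictions of `ρ` to `J` and its complement. -/
theorem stmt4 (p q : ℕ) (hp : 1 ≤ p) (hq : 1 ≤ q)
    (ρ : Equiv.Perm (Fin (p + q))) (hρ : ρ ∈ SDiscNC p q)
    (u v : Fin (p + q)) (hu : (u : ℕ) < p) (hv : p ≤ (v : ℕ))
    (J : Set (Fin (p + q))) (hJ : J = {x | ρ.SameCycle u x ∨ ρ.SameCycle v x})
    (ρJ ρJc : Equiv.Perm (Fin (p + q)))
    (hρJ : ∀ x ∈ J, ρJ x = ρ x) (hρJ' : ∀ x ∉ J, ρJ x = x)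
    (hρJc : ∀ x ∉ J, ρJc x = ρ x) (hρJc' : ∀ x ∈ J, ρJc x = x)
    (σ₁ σ₂ : Equiv.Perm (Fin (p + q)))
    (hσ₁fix : ∀ x ∉ J, σ₁ x = x) (hσ₂fix : ∀ x ∈ J, σ₂ x = x)
    (hσ₁nc : IsNoncrossingWithin J σ₁ ρJ)
    (hσ₁br : ∃ a b : Fin (p + q), σ₁.SameCycle a b ∧ ρ.SameCycle u a ∧ ρ.SameCycle v b)
    (hσ₂nc : IsNoncrossingWithin Jᶜ σ₂ ρJc)
    (hσ₂ref : ∀ x y : Fin (p + q), σ₂.SameCycle x y → ρ.SameCycle x y) :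
    σ₁ * σ₂ ∈ SAnnNC p q :=
  stmt4_general p q ρ hρ u v hu hv J hJ ρJ ρJc hρJ hρJ' hρJc hρJc' σ₁ σ₂ hσ₁fix hσ₂fix hσ₁nc hσ₁br
    hσ₂nc hσ₂ref
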